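/- Let A ∈ ℝ^{n×n} be invertible, W ∈ ℝ^{n×n} symmetric positive definite, and let S_1, …, S_r with S_i ∈ ℝ^{n×q_i} each have full column rank, with probabilities p_i > 0, Σ_{i=1}^r p_i = 1. Fix X_0 ∈ ℝ^{n×n}; for each path s = (s_0, …, s_{k−1}) ∈ {1,…,r}^k define X_k(s) recursively by X_{j+1}(s) = X_j(s) + W A^T S_{s_j} (S_{s_j}^T A W A^T S_{s_j})^{-1} S_{s_j}^T (I − A X_j(s)), starting from X_0(s) = X_0. Then, with Z_i := A^T S_i (S_i^T A W A^T S_i)^{-1} S_i^T A and ρ := 1 − λ_min(W^{1/2}(Σ_{i=1}^r p_i Z_i)W^{1/2}), the expected squared error satisfies Σ_{s ∈ {1,…,r}^k} (Π_{j<k} p_{s_j}) ‖X_k(s) − A^{-1}‖_{F(W^{-1})}² ≤ ρ^k ‖X_0 − A^{-1}‖_{F(W^{-1})}². -/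

import Mathlib

/-!
With `R = W^{1/2}` and `F = R⁻¹ (X - A⁻¹) R⁻¹`, the weighted norm `‖X - A⁻¹‖²_{F(W⁻¹)}` is the
Frobenius norm `Tr (Fᵀ F)`, and a step with sketch `S_i` replaces `F` by `(1 - P_i) F`, where
`P_i = R Z_i R = C (Cᵀ C)⁻¹ Cᵀ` with `C = R Aᵀ S_i` is an orthogonal projection. Hence the new
error is `Tr (Fᵀ F) - Tr (Fᵀ P_i F)`, and averaging over `i` gives
`Tr (Fᵀ F) - Tr (Fᵀ M F) ≤ (1 - λ_min M) Tr (Fᵀ F)` for `M = R (∑ p_i Z_i) R`.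
The `k`-step bound follows by conditioning on the first sketch and induction on `k`.
-/

open Matrix BigOperators

/-- Squared weighted Frobenius norm: `‖X‖_{F(W⁻¹)}² = Tr(Xᵀ W⁻¹ X W⁻¹)`. -/
noncomputable def wFNormSq {n : ℕ} (W X : Matrix (Fin n) (Fin n) ℝ) : ℝ :=
  (Xᵀ * W⁻¹ * X * W⁻¹).trace

/-- `Z = Aᵀ S (Sᵀ A W Aᵀ S)⁻¹ Sᵀ A`. -/
noncomputable def Zmat {n q : ℕ} (A W : Matrix (Fin n) (Fin n) ℝ)
    (S : Matrix (Fin n) (Fin q) ℝ) : Matrix (Fin n) (Fin n) ℝ :=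
  Aᵀ * S * (Sᵀ * A * W * Aᵀ * S)⁻¹ * Sᵀ * A

/-- One sketch-and-project step for the inverse equation `A X = I` (row variant). -/
noncomputable def rowStep {n q : ℕ} (A W : Matrix (Fin n) (Fin n) ℝ)
    (S : Matrix (Fin n) (Fin q) ℝ) (X : Matrix (Fin n) (Fin n) ℝ) :
    Matrix (Fin n) (Fin n) ℝ :=
  X + W * Aᵀ * S * (Sᵀ * A * W * Aᵀ * S)⁻¹ * Sᵀ * (1 - A * X)

/-- The square root of a positive semidefinite matrix, as `Matrix.PosSemidef.sqrt` was defined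
in the older Mathlib: `U * diagonal (√λ) * Uᴴ` with `U` the eigenvector unitary. -/
noncomputable def posSemidefSqrt {n : ℕ} {A : Matrix (Fin n) (Fin n) ℝ} (hA : A.PosSemidef) :
    Matrix (Fin n) (Fin n) ℝ :=
  hA.1.eigenvectorUnitary.1 * diagonal ((↑) ∘ (√·) ∘ hA.1.eigenvalues) *
    (star hA.1.eigenvectorUnitary : Matrix (Fin n) (Fin n) ℝ)

namespace Matrix

theorem mulVec_injective_of_rank_eq_card {m k K : Type*} [Fintype k] [Field K]
    {S : Matrix m k K} (hS : S.rank = Fintype.card k) : Function.Injective S.mulVec :=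
  mulVec_injective_iff.mpr <| linearIndependent_iff_card_eq_finrank_span.mpr <|
    hS.symm.trans (rank_eq_finrank_span_cols S)

section RangeProjection

variable {m k : Type*} [Fintype m] [Fintype k] [DecidableEq k]

noncomputable def rangeProjection (C : Matrix m k ℝ) : Matrix m m ℝ := C * (Cᵀ * C)⁻¹ * Cᵀ

theorem rangeProjection_transpose (C : Matrix m k ℝ) :
    C.rangeProjectionᵀ = C.rangeProjection := by
  simp only [rangeProjection, transpose_mul, transpose_transpose, transpose_nonsing_inv,
    Matrix.mul_assoc]

theorem isIdempotentElem_rangeProjection {C : Matrix m k ℝ}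
    (hC : Function.Injective C.mulVec) : IsIdempotentElem C.rangeProjection := by
  have hG : IsUnit (Cᵀ * C).det := by
    simpa using (PosDef.conjTranspose_mul_self C hC).det_pos.ne'.isUnit
  calc C * (Cᵀ * C)⁻¹ * Cᵀ * (C * (Cᵀ * C)⁻¹ * Cᵀ)
      = C * ((Cᵀ * C)⁻¹ * (Cᵀ * C)) * (Cᵀ * C)⁻¹ * Cᵀ := by simp only [Matrix.mul_assoc]
    _ = C.rangeProjection := by rw [nonsing_inv_mul _ hG, Matrix.mul_one, rangeProjection]

end RangeProjection

theorem trace_transpose_mul_self_one_sub_mul {m k : Type*} [Fintype m] [Fintype k]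
    [DecidableEq m] {P : Matrix m m ℝ} (hPt : Pᵀ = P) (hP : IsIdempotentElem P)
    (F : Matrix m k ℝ) :
    (((1 - P) * F)ᵀ * ((1 - P) * F)).trace = (Fᵀ * F).trace - (Fᵀ * P * F).trace := by
  have hQ : (1 - P)ᵀ * (1 - P) = 1 - P := by
    rw [transpose_sub, transpose_one, hPt, hP.one_sub.eq]
  rw [transpose_mul, Matrix.mul_assoc, ← Matrix.mul_assoc (1 - P)ᵀ, hQ]
  simp only [Matrix.sub_mul, Matrix.mul_sub, Matrix.one_mul, Matrix.mul_assoc, trace_sub]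

theorem inv_mul_one_sub_mul_mul_inv {m : Type*} [Fintype m] [DecidableEq m]
    {R W : Matrix m m ℝ} (hR : IsUnit R.det) (hRR : R * R = W) (Z E : Matrix m m ℝ) :
    R⁻¹ * ((1 - W * Z) * E) * R⁻¹ = (1 - R * Z * R) * (R⁻¹ * E * R⁻¹) := by
  subst hRR
  have h : R * Z * R * (R⁻¹ * E * R⁻¹) = R⁻¹ * (R * R * Z * E) * R⁻¹ := by
    simp only [Matrix.mul_assoc, mul_nonsing_inv_cancel_left _ _ hR,
      nonsing_inv_mul_cancel_left _ _ hR]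
  rw [Matrix.sub_mul, Matrix.sub_mul, Matrix.one_mul, Matrix.one_mul, h, Matrix.mul_sub,
    Matrix.sub_mul]

open scoped MatrixOrder in
theorem IsHermitian.iInf_eigenvalues_mul_trace_le {m k : Type*} [Fintype m] [Fintype k]
    [DecidableEq m] {H : Matrix m m ℝ} (hH : H.IsHermitian) (F : Matrix m k ℝ) :
    (⨅ j, hH.eigenvalues j) * (Fᵀ * F).trace ≤ (Fᵀ * H * F).trace := by
  have hpsd : (H - (⨅ j, hH.eigenvalues j) • 1).PosSemidef := by
    rw [← Matrix.le_iff, ← Algebra.algebraMap_eq_smul_one,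
      algebraMap_le_iff_le_spectrum hH.isSelfAdjoint, hH.spectrum_real_eq_range_eigenvalues]
    rintro _ ⟨j, rfl⟩
    exact ciInf_le (Finite.bddBelow_range _) j
  have := (hpsd.conjTranspose_mul_mul_same F).trace_nonneg
  simp only [conjTranspose_eq_transpose_of_trivial, Matrix.mul_sub, Matrix.sub_mul, trace_sub,
    Matrix.mul_smul, Matrix.smul_mul, Matrix.mul_one, trace_smul, smul_eq_mul] at this
  linarith

end Matrix

theorem sum_prod_mul_foldl_le_pow_mul {α ι : Type*} [Fintype ι] (f : ι → α → α) (p : ι → ℝ)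
    (hp : ∀ i, 0 ≤ p i) (V : α → ℝ) (hV : ∀ x, 0 ≤ V x) (ρ : ℝ)
    (hstep : ∀ x, ∑ i, p i * V (f i x) ≤ ρ * V x) (k : ℕ) (x₀ : α) :
    ∑ s : Fin k → ι, (∏ j, p (s j)) * V ((List.ofFn s).foldl (fun x i => f i x) x₀) ≤
      ρ ^ k * V x₀ := by
  rcases lt_or_ge ρ 0 with hρ | hρ
  · -- the one-step bound with `ρ < 0` forces `V = 0`
    have hV0 : ∀ x, V x = 0 := fun x =>
      le_antisymm (nonpos_of_mul_nonneg_right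
        ((Finset.sum_nonneg fun i _ => mul_nonneg (hp i) (hV _)).trans (hstep x)) hρ) (hV x)
    simp [hV0]
  induction k generalizing x₀ with
  | zero => simp
  | succ k ih =>
    calc ∑ s : Fin (k + 1) → ι, (∏ j, p (s j)) * V ((List.ofFn s).foldl (fun x i => f i x) x₀)
        = ∑ i, p i * ∑ t : Fin k → ι,
            (∏ j, p (t j)) * V ((List.ofFn t).foldl (fun x i => f i x) (f i x₀)) := by
          rw [← (Fin.consEquiv fun _ => ι).sum_comp, Fintype.sum_prod_type]
          simp [Fin.consEquiv, Fin.prod_univ_succ, List.ofFn_succ, Finset.mul_sum, mul_assoc]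
      _ ≤ ∑ i, p i * (ρ ^ k * V (f i x₀)) :=
          Finset.sum_le_sum fun i _ => mul_le_mul_of_nonneg_left (ih _) (hp i)
      _ = ρ ^ k * ∑ i, p i * V (f i x₀) := by
          rw [Finset.mul_sum]
          exact Finset.sum_congr rfl fun i _ => by ring
      _ ≤ ρ ^ k * (ρ * V x₀) := mul_le_mul_of_nonneg_left (hstep x₀) (pow_nonneg hρ k)
      _ = ρ ^ (k + 1) * V x₀ := by ring

section WeightedNorm

variable {n : ℕ} {W : Matrix (Fin n) (Fin n) ℝ}

theorem posSemidefSqrt_mul_self (hW : W.PosSemidef) :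
    posSemidefSqrt hW * posSemidefSqrt hW = W := by
  conv_rhs => rw [hW.1.spectral_theorem, Unitary.conjStarAlgAut_apply]
  simp only [posSemidefSqrt, Matrix.mul_assoc]
  rw [← Matrix.mul_assoc (star _ : Matrix _ _ ℝ), Unitary.coe_star_mul_self, Matrix.one_mul,
    ← Matrix.mul_assoc (diagonal _), diagonal_mul_diagonal]
  congr 3
  ext i
  simp [Real.mul_self_sqrt (hW.eigenvalues_nonneg i)]

theorem posSemidefSqrt_transpose (hW : W.PosSemidef) :
    (posSemidefSqrt hW)ᵀ = posSemidefSqrt hW := by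
  simp only [posSemidefSqrt, star_eq_conjTranspose, conjTranspose_eq_transpose_of_trivial,
    transpose_mul, transpose_transpose, diagonal_transpose, Matrix.mul_assoc]

theorem isUnit_det_posSemidefSqrt (hW : W.PosDef) :
    IsUnit (posSemidefSqrt hW.posSemidef).det := by
  have h := hW.det_pos
  rw [← posSemidefSqrt_mul_self hW.posSemidef, det_mul] at h
  exact (mul_self_pos.mp h).isUnit

theorem wFNormSq_eq_trace (hW : W.PosSemidef) (E : Matrix (Fin n) (Fin n) ℝ) :
    wFNormSq W E = (((posSemidefSqrt hW)⁻¹ * E * (posSemidefSqrt hW)⁻¹)ᵀ *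
      ((posSemidefSqrt hW)⁻¹ * E * (posSemidefSqrt hW)⁻¹)).trace := by
  have hRt : (posSemidefSqrt hW)⁻¹ᵀ = (posSemidefSqrt hW)⁻¹ := by
    rw [transpose_nonsing_inv, posSemidefSqrt_transpose]
  have hWinv : W⁻¹ = (posSemidefSqrt hW)⁻¹ * (posSemidefSqrt hW)⁻¹ := by
    rw [← Matrix.mul_inv_rev, posSemidefSqrt_mul_self]
  rw [wFNormSq, hWinv, transpose_mul, transpose_mul, hRt]
  simp only [← Matrix.mul_assoc]
  rw [trace_mul_comm]
  simp only [Matrix.mul_assoc]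

theorem wFNormSq_nonneg (hW : W.PosSemidef) (E : Matrix (Fin n) (Fin n) ℝ) :
    0 ≤ wFNormSq W E := by
  rw [wFNormSq_eq_trace hW]
  simpa using (posSemidef_conjTranspose_mul_self
    ((posSemidefSqrt hW)⁻¹ * E * (posSemidefSqrt hW)⁻¹)).trace_nonneg

end WeightedNorm

section SketchAndProject

variable {n : ℕ} {A W : Matrix (Fin n) (Fin n) ℝ}

theorem rowStep_sub_inv {q : ℕ} (hA : IsUnit A.det) (S : Matrix (Fin n) (Fin q) ℝ)
    (X : Matrix (Fin n) (Fin n) ℝ) :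
    rowStep A W S X - A⁻¹ = (1 - W * Zmat A W S) * (X - A⁻¹) := by
  have h : 1 - A * X = A * (A⁻¹ - X) := by rw [Matrix.mul_sub, mul_nonsing_inv A hA]
  rw [rowStep, h, Matrix.sub_mul, Matrix.one_mul]
  simp only [Zmat, Matrix.mul_assoc, ← neg_sub X, Matrix.mul_neg]
  abel

theorem posSemidefSqrt_mul_Zmat_mul_posSemidefSqrt {q : ℕ} (hW : W.PosSemidef)
    (S : Matrix (Fin n) (Fin q) ℝ) :
    posSemidefSqrt hW * Zmat A W S * posSemidefSqrt hW =
      (posSemidefSqrt hW * Aᵀ * S).rangeProjection := by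
  have hG : (posSemidefSqrt hW * Aᵀ * S)ᵀ * (posSemidefSqrt hW * Aᵀ * S) =
      Sᵀ * A * W * Aᵀ * S := by
    conv_rhs => rw [← posSemidefSqrt_mul_self hW]
    simp only [transpose_mul, transpose_transpose, posSemidefSqrt_transpose, Matrix.mul_assoc]
  rw [rangeProjection, hG]
  simp only [Zmat, transpose_mul, transpose_transpose, posSemidefSqrt_transpose, Matrix.mul_assoc]

theorem injective_mulVec_posSemidefSqrt_mul_transpose_mul {q : ℕ} (hA : IsUnit A.det)
    (hW : W.PosDef) {S : Matrix (Fin n) (Fin q) ℝ} (hS : S.rank = q) :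
    Function.Injective (posSemidefSqrt hW.posSemidef * Aᵀ * S).mulVec := by
  have hRA : Function.Injective (posSemidefSqrt hW.posSemidef * Aᵀ).mulVec := by
    rw [mulVec_injective_iff_isUnit, isUnit_iff_isUnit_det, det_mul, det_transpose]
    exact (isUnit_det_posSemidefSqrt hW).mul hA
  have hS' : Function.Injective S.mulVec :=
    mulVec_injective_of_rank_eq_card (by rw [hS, Fintype.card_fin])
  have hcomp : (posSemidefSqrt hW.posSemidef * Aᵀ * S).mulVec =
      (posSemidefSqrt hW.posSemidef * Aᵀ).mulVec ∘ S.mulVec :=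
    funext fun x => (mulVec_mulVec x _ S).symm
  exact hcomp ▸ hRA.comp hS'

theorem wFNormSq_rowStep_sub_inv {q : ℕ} (hA : IsUnit A.det) (hW : W.PosDef)
    {S : Matrix (Fin n) (Fin q) ℝ} (hS : S.rank = q) (X : Matrix (Fin n) (Fin n) ℝ) :
    letI R := posSemidefSqrt hW.posSemidef
    letI F := R⁻¹ * (X - A⁻¹) * R⁻¹
    wFNormSq W (rowStep A W S X - A⁻¹) =
      (Fᵀ * F).trace - (Fᵀ * (R * Zmat A W S * R) * F).trace := by
  rw [wFNormSq_eq_trace hW.posSemidef, rowStep_sub_inv hA,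
    inv_mul_one_sub_mul_mul_inv (isUnit_det_posSemidefSqrt hW) (posSemidefSqrt_mul_self _),
    posSemidefSqrt_mul_Zmat_mul_posSemidefSqrt,
    trace_transpose_mul_self_one_sub_mul (rangeProjection_transpose _)
      (isIdempotentElem_rangeProjection
        (injective_mulVec_posSemidefSqrt_mul_transpose_mul hA hW hS))]

theorem sum_mul_wFNormSq_rowStep_sub_inv_le {r : ℕ} (hA : IsUnit A.det) (hW : W.PosDef)
    {q : Fin r → ℕ} {S : ∀ i, Matrix (Fin n) (Fin (q i)) ℝ} (hS : ∀ i, (S i).rank = q i)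
    {p : Fin r → ℝ} (hsum : ∑ i, p i = 1)
    (hM : (posSemidefSqrt hW.posSemidef * (∑ i, p i • Zmat A W (S i)) *
      posSemidefSqrt hW.posSemidef).IsHermitian) (X : Matrix (Fin n) (Fin n) ℝ) :
    ∑ i, p i * wFNormSq W (rowStep A W (S i) X - A⁻¹) ≤
      (1 - ⨅ j, hM.eigenvalues j) * wFNormSq W (X - A⁻¹) := by
  set R := posSemidefSqrt hW.posSemidef
  set F := R⁻¹ * (X - A⁻¹) * R⁻¹
  have hmean : (Fᵀ * (R * (∑ i, p i • Zmat A W (S i)) * R) * F).trace =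
      ∑ i, p i * (Fᵀ * (R * Zmat A W (S i) * R) * F).trace := by
    simp only [Matrix.mul_sum, Matrix.sum_mul, Matrix.mul_smul, Matrix.smul_mul, trace_sum,
      trace_smul, smul_eq_mul]
  calc ∑ i, p i * wFNormSq W (rowStep A W (S i) X - A⁻¹)
      = (Fᵀ * F).trace - (Fᵀ * (R * (∑ i, p i • Zmat A W (S i)) * R) * F).trace := by
        simp only [wFNormSq_rowStep_sub_inv hA hW (hS _), mul_sub (p _)]
        rw [Finset.sum_sub_distrib, ← Finset.sum_mul, hsum, one_mul, hmean]
    _ ≤ (1 - ⨅ j, hM.eigenvalues j) * (Fᵀ * F).trace := by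
        linarith [hM.iInf_eigenvalues_mul_trace_le F]
    _ = (1 - ⨅ j, hM.eigenvalues j) * wFNormSq W (X - A⁻¹) := by rw [wFNormSq_eq_trace]

end SketchAndProject

theorem stmt12_general {n r : ℕ} (A W : Matrix (Fin n) (Fin n) ℝ)
    (q : Fin r → ℕ) (S : ∀ i, Matrix (Fin n) (Fin (q i)) ℝ)
    (hA : IsUnit A.det) (hW : W.PosDef) (hS : ∀ i, (S i).rank = q i)
    (p : Fin r → ℝ) (hp : ∀ i, 0 < p i) (hsum : ∑ i, p i = 1)
    (X0 : Matrix (Fin n) (Fin n) ℝ) (k : ℕ)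
    (hM : (posSemidefSqrt hW.posSemidef * (∑ i, p i • Zmat A W (S i)) *
      posSemidefSqrt hW.posSemidef).IsHermitian) :
    ∑ s : Fin k → Fin r, (∏ j, p (s j)) *
        wFNormSq W ((List.ofFn s).foldl (fun X i => rowStep A W (S i) X) X0 - A⁻¹) ≤
      (1 - ⨅ j, hM.eigenvalues j) ^ k * wFNormSq W (X0 - A⁻¹) :=
  sum_prod_mul_foldl_le_pow_mul (fun i X => rowStep A W (S i) X) p (fun i => (hp i).le)
    (fun X => wFNormSq W (X - A⁻¹)) (fun _ => wFNormSq_nonneg hW.posSemidef _) _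
    (sum_mul_wFNormSq_rowStep_sub_inv_le hA hW hS hsum hM) k X0

theorem stmt12 {n r : ℕ} (hn : 0 < n) (A W : Matrix (Fin n) (Fin n) ℝ)
    (q : Fin r → ℕ) (S : ∀ i, Matrix (Fin n) (Fin (q i)) ℝ)
    (hA : IsUnit A.det) (hW : W.PosDef) (hS : ∀ i, (S i).rank = q i)
    (p : Fin r → ℝ) (hp : ∀ i, 0 < p i) (hsum : ∑ i, p i = 1)
    (X0 : Matrix (Fin n) (Fin n) ℝ) (k : ℕ)
    (hM : (posSemidefSqrt hW.posSemidef * (∑ i, p i • Zmat A W (S i)) *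
      posSemidefSqrt hW.posSemidef).IsHermitian) :
    ∑ s : Fin k → Fin r, (∏ j, p (s j)) *
        wFNormSq W ((List.ofFn s).foldl (fun X i => rowStep A W (S i) X) X0 - A⁻¹) ≤
      (1 - ⨅ j, hM.eigenvalues j) ^ k * wFNormSq W (X0 - A⁻¹) :=
  stmt12_general A W q S hA hW hS p hp hsum X0 k hM
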